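/- The repair map that sends p̂ to (1−η↑)p̂ + η↑p̄ when eᵀp̂ < eᵀd and to (1−η↓)p̂ + η↓p̲ when eᵀp̂ ≥ eᵀd produces a point of the economic dispatch feasible set {p : eᵀp = eᵀd, p̲ ≤ p ≤ p̄} for every p̂ with p̲ ≤ p̂ ≤ p̄, if and only if the feasible set is nonempty (assuming p̲ ≤ p̄ with p̲ ≠ p̄, so the denominators appearing in η↑, η↓ can be made nonzero). -/
import Mathlib

lemma combo_aux (N : ℕ) (a b lo hi : Fin N → ℝ) (η : ℝ) (hη0 : 0 ≤ η) (hη1 : η ≤ 1)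
    (hab : ∀ i, lo i ≤ a i ∧ a i ≤ hi i) (hbb : ∀ i, lo i ≤ b i ∧ b i ≤ hi i) :
    (∑ i, ((1 - η) * a i + η * b i) = (1 - η) * ∑ i, a i + η * ∑ i, b i) ∧
    ∀ i, lo i ≤ (1 - η) * a i + η * b i ∧ (1 - η) * a i + η * b i ≤ hi i := by
  constructor
  · rw [Finset.sum_add_distrib, ← Finset.mul_sum, ← Finset.mul_sum]
  · intro i
    have h1 : (1 - η) * lo i ≤ (1 - η) * a i :=
      mul_le_mul_of_nonneg_left (hab i).1 (by linarith)
    have h2 : η * lo i ≤ η * b i := mul_le_mul_of_nonneg_left (hbb i).1 hη0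
    have h3 : (1 - η) * a i ≤ (1 - η) * hi i :=
      mul_le_mul_of_nonneg_left (hab i).2 (by linarith)
    have h4 : η * b i ≤ η * hi i := mul_le_mul_of_nonneg_left (hbb i).2 hη0
    constructor <;> nlinarith

theorem stmt_5 (N : ℕ) (plo phi d : Fin N → ℝ)
    (hbounds : ∀ i, plo i ≤ phi i)
    (hstrict : ∑ i, plo i < ∑ i, phi i)
    (repair : (Fin N → ℝ) → (Fin N → ℝ))
    (hrepair : ∀ phat : Fin N → ℝ,
      repair phat = fun i =>
        if ∑ j, phat j < ∑ j, d j then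
          (1 - (∑ j, d j - ∑ j, phat j) / (∑ j, phi j - ∑ j, phat j)) * phat i
            + ((∑ j, d j - ∑ j, phat j) / (∑ j, phi j - ∑ j, phat j)) * phi i
        else
          (1 - (∑ j, phat j - ∑ j, d j) / (∑ j, phat j - ∑ j, plo j)) * phat i
            + ((∑ j, phat j - ∑ j, d j) / (∑ j, phat j - ∑ j, plo j)) * plo i) :
    (∀ phat : Fin N → ℝ, (∀ i, plo i ≤ phat i ∧ phat i ≤ phi i) →
        (∑ i, repair phat i = ∑ i, d i ∧
          ∀ i, plo i ≤ repair phat i ∧ repair phat i ≤ phi i)) ↔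
    (∃ p : Fin N → ℝ, (∑ i, p i = ∑ i, d i) ∧ ∀ i, plo i ≤ p i ∧ p i ≤ phi i) := by
  constructor
  · intro hall
    obtain ⟨h1, h2⟩ := hall plo (fun i => ⟨le_refl _, hbounds i⟩)
    exact ⟨repair plo, h1, h2⟩
  · rintro ⟨p, hpsum, hpbox⟩ phat hbox
    have hL : ∑ i, plo i ≤ ∑ i, d i := by
      rw [← hpsum]; exact Finset.sum_le_sum fun i _ => (hpbox i).1
    have hH : ∑ i, d i ≤ ∑ i, phi i := by
      rw [← hpsum]; exact Finset.sum_le_sum fun i _ => (hpbox i).2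
    have hSL : ∑ i, plo i ≤ ∑ i, phat i :=
      Finset.sum_le_sum fun i _ => (hbox i).1
    have hSH : ∑ i, phat i ≤ ∑ i, phi i :=
      Finset.sum_le_sum fun i _ => (hbox i).2
    rw [hrepair]
    by_cases hc : ∑ j, phat j < ∑ j, d j
    · simp only [if_pos hc]
      set η := (∑ j, d j - ∑ j, phat j) / (∑ j, phi j - ∑ j, phat j) with hη
      have hden : 0 < ∑ j, phi j - ∑ j, phat j := by linarith
      have hη0 : 0 ≤ η := div_nonneg (by linarith) (by linarith)
      have hη1 : η ≤ 1 := by rw [hη, div_le_one hden]; linarith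
      have hbb : ∀ i, plo i ≤ phi i ∧ phi i ≤ phi i := fun i => ⟨hbounds i, le_refl _⟩
      obtain ⟨hsum, hbds⟩ := combo_aux N phat phi plo phi η hη0 hη1 hbox hbb
      refine ⟨?_, hbds⟩
      rw [hsum]
      have h1 : η * (∑ j, phi j - ∑ j, phat j) = ∑ j, d j - ∑ j, phat j :=
        div_mul_cancel₀ _ hden.ne'
      nlinarith [h1]
    · simp only [if_neg hc]
      push_neg at hc
      set η := (∑ j, phat j - ∑ j, d j) / (∑ j, phat j - ∑ j, plo j) with hη
      have hbb : ∀ i, plo i ≤ plo i ∧ plo i ≤ phi i := fun i => ⟨le_refl _, hbounds i⟩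
      by_cases hd : ∑ j, phat j - ∑ j, plo j = 0
      · have hDS : ∑ j, phat j = ∑ j, d j := by linarith
        have hη0 : η = 0 := by rw [hη, hDS]; simp
        obtain ⟨hsum, hbds⟩ := combo_aux N phat plo plo phi η (by rw [hη0]) (by rw [hη0]; norm_num) hbox hbb
        refine ⟨?_, hbds⟩
        rw [hsum, hη0]
        simp [hDS]
      · have hden : 0 < ∑ j, phat j - ∑ j, plo j := lt_of_le_of_ne (by linarith) (Ne.symm hd)
        have hη0 : 0 ≤ η := div_nonneg (by linarith) (by linarith)
        have hη1 : η ≤ 1 := by rw [hη, div_le_one hden]; linarith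
        obtain ⟨hsum, hbds⟩ := combo_aux N phat plo plo phi η hη0 hη1 hbox hbb
        refine ⟨?_, hbds⟩
        rw [hsum]
        have h1 : η * (∑ j, phat j - ∑ j, plo j) = ∑ j, phat j - ∑ j, d j :=
          div_mul_cancel₀ _ hden.ne'
        nlinarith [h1]
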